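/- Under the Hopf–Lax hypotheses, the map t ↦ 𝒱(t,μ) is nondecreasing on [0,T): for 0 ≤ t < t+h < T, 𝒱(t,μ) ≤ 𝒱(t+h,μ); moreover 𝒱(t+h,μ) − 𝒱(t,μ) ≤ h · sup{ ℋ(ξ) : ξ ∈ 𝒫_{2,μ}(ℝ^{2d}), ‖ξ‖_μ ≤ Lip(𝒢;W₂) }, where ℋ(ξ) = ∫ H(p) dξ(x,p) with H = L* the Legendre transform of L. -/

import Mathlib

/-!
With `s = T - t`, the Lagrangian term `s ℒ(s⁻¹γ) = ∫ s L(v / s) dγ` is the perspective of the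
convex function `L`; since `L 0 = 0` it is nonincreasing in `s`, so every plan costs no more at
time `t` than at time `t + h`, which gives monotonicity.

For the rate, a plan `γ` at time `t` is rescaled to `((s - h) / s) γ` at time `t + h`: this keeps
the velocity plan `η = s⁻¹γ`, turns the Lagrangian term `s ℒ(η)` into `(s - h) ℒ(η)`, and moves
`exp_μ` by at most `h ‖η‖_μ` in `W₂`. Hence `𝒱(t + h) ≤ cost(γ) + h (K ‖η‖_μ - ℒ(η))`, and
Fenchel–Young at `p = -(K / ‖η‖_μ) v` bounds `K ‖η‖_μ - ℒ(η)` by `ℋ(ξ)` for a plan `ξ` of norm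
at most `K`. The coercivity of `L` and the Lipschitz bound on `𝒢` keep the infima finite.
-/

open MeasureTheory Set Filter Metric
open scoped Topology ENNReal NNReal

noncomputable section

abbrev E (d : ℕ) : Type := EuclideanSpace ℝ (Fin d)

/-- Real inner product. -/
def rinner {d : ℕ} (x y : E d) : ℝ := inner ℝ x y

/-- The second moment of a measure. -/
def secondMoment {d : ℕ} (μ : Measure (E d)) : ℝ := ∫ x, ‖x‖ ^ 2 ∂μ

/-- `γ` is a coupling of `μ` and `ν`. -/
def IsCoupling {d : ℕ} (γ : Measure (E d × E d)) (μ ν : Measure (E d)) : Prop :=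
  γ.map Prod.fst = μ ∧ γ.map Prod.snd = ν

/-- The 2-Wasserstein distance. -/
def W2 {d : ℕ} (μ ν : Measure (E d)) : ℝ :=
  sInf {c | ∃ γ : Measure (E d × E d), IsProbabilityMeasure γ ∧ IsCoupling γ μ ν ∧
    c = Real.sqrt (∫ p, ‖p.1 - p.2‖ ^ 2 ∂γ)}

/-- Probability measures with finite second moment. -/
def P2 (d : ℕ) : Set (Measure (E d)) :=
  {μ | IsProbabilityMeasure μ ∧ Integrable (fun x => ‖x‖ ^ 2) μ}

/-- Plans (velocity plans) with first marginal `μ` and finite second moment. -/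
def plans {d : ℕ} (μ : Measure (E d)) : Set (Measure (E d × E d)) :=
  {γ | IsProbabilityMeasure γ ∧ γ.map Prod.fst = μ ∧
    Integrable (fun p => ‖p.1‖ ^ 2 + ‖p.2‖ ^ 2) γ}

/-- The Wasserstein norm of a plan: `‖γ‖_μ = (∫ |z|² dγ(x,z))^{1/2}`. -/
def plNorm {d : ℕ} (γ : Measure (E d × E d)) : ℝ := Real.sqrt (∫ p, ‖p.2‖ ^ 2 ∂γ)

/-- The exponential map `exp_μ(γ) = (π₁ + π₂)_# γ`. -/
def expMap {d : ℕ} (γ : Measure (E d × E d)) : Measure (E d) :=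
  γ.map (fun p => p.1 + p.2)

/-- Rescaling of a plan in the second coordinate: `λ·γ = (π₁, λπ₂)_# γ`. -/
def scal {d : ℕ} (lam : ℝ) (γ : Measure (E d × E d)) : Measure (E d × E d) :=
  γ.map (fun p => (p.1, lam • p.2))

/-- Couplings of two plans along their common first marginal. -/
def GammaMu {d : ℕ} (γ₁ γ₂ : Measure (E d × E d)) : Set (Measure (E d × E d × E d)) :=
  {θ | IsProbabilityMeasure θ ∧ θ.map (fun q => (q.1, q.2.1)) = γ₁ ∧
    θ.map (fun q => (q.1, q.2.2)) = γ₂}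

/-- The relaxed Lagrangian `ℒ(γ) = ∫ L(v) dγ(x,v)`. -/
def Lag {d : ℕ} (L : E d → ℝ) (γ : Measure (E d × E d)) : ℝ := ∫ p, L p.2 ∂γ

/-- The Hopf-Lax function. -/
def HL {d : ℕ} (G : Measure (E d) → ℝ) (L : E d → ℝ) (T t : ℝ) (μ : Measure (E d)) : ℝ :=
  sInf {r | ∃ γ ∈ plans μ, r = G (expMap γ) + (T - t) * Lag L (scal (T - t)⁻¹ γ)}

theorem mul_le_mul_sq_add_sq_div {a : ℝ} (ha : 0 < a) (x y : ℝ) :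
    x * y ≤ a * y ^ 2 + x ^ 2 / (4 * a) := by
  have hsq : a * y ^ 2 + x ^ 2 / (4 * a) - x * y = (2 * a * y - x) ^ 2 / (4 * a) := by
    field_simp
    ring
  rw [← sub_nonneg, hsq]
  positivity

theorem norm_smul_sq {F : Type*} [SeminormedAddCommGroup F] [NormedSpace ℝ F] (a : ℝ) (z : F) :
    ‖a • z‖ ^ 2 = a ^ 2 * ‖z‖ ^ 2 := by
  rw [norm_smul, mul_pow, Real.norm_eq_abs, sq_abs]

theorem ConvexOn.antitoneOn_perspective {F : Type*} [AddCommGroup F] [Module ℝ F] {L : F → ℝ}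
    (hL : ConvexOn ℝ univ L) (hL0 : L 0 = 0) (z : F) :
    AntitoneOn (fun s : ℝ => s * L (s⁻¹ • z)) (Ioi 0) := by
  intro s' (hs' : 0 < s') s (hs : 0 < s) hle
  have hconv := hL.2 (mem_univ (s'⁻¹ • z)) (mem_univ 0) (div_nonneg hs'.le hs.le)
    (sub_nonneg.2 ((div_le_one hs).2 hle)) (add_sub_cancel _ _)
  have hinv : s' / s * s'⁻¹ = s⁻¹ := by field_simp
  rw [smul_zero, add_zero, smul_smul, hinv, hL0, smul_zero, add_zero, smul_eq_mul] at hconv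
  calc s * L (s⁻¹ • z) ≤ s * (s' / s * L (s'⁻¹ • z)) := by gcongr
    _ = s' * L (s'⁻¹ • z) := by field_simp

theorem integrable_comp_of_abs_le {α F : Type*} [MeasurableSpace α] [NormedAddCommGroup F]
    {ν : Measure α} [IsFiniteMeasure ν] {f : α → F} {g : F → ℝ} {A B : ℝ}
    (hf : Integrable (fun x => ‖f x‖ ^ 2) ν) (hgf : AEStronglyMeasurable (fun x => g (f x)) ν)
    (hg : ∀ z, |g z| ≤ A + B * ‖z‖ ^ 2) : Integrable (fun x => g (f x)) ν :=
  ((integrable_const A).add (hf.const_mul B)).mono' hgf (Eventually.of_forall fun x => hg (f x))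

section Hamiltonian

variable {F : Type*} [NormedAddCommGroup F] [InnerProductSpace ℝ F]

def IsHamiltonian (L H : F → ℝ) : Prop :=
  ∀ p, IsLUB {r | ∃ v : F, r = inner ℝ (-v) p - L v} (H p)

variable {L H : F → ℝ}

theorem IsHamiltonian.inner_sub_le (hH : IsHamiltonian L H) (v p : F) :
    inner ℝ (-v) p - L v ≤ H p :=
  (hH p).1 ⟨v, rfl⟩

theorem IsHamiltonian.nonneg (hH : IsHamiltonian L H) (hL0 : L 0 = 0) (p : F) : 0 ≤ H p := by
  simpa [hL0] using hH.inner_sub_le 0 p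

theorem IsHamiltonian.le_sq_div_add (hH : IsHamiltonian L H) {c C : ℝ} (hc : 0 < c)
    (hL : ∀ v, c * ‖v‖ ^ 2 - C ≤ L v) (p : F) : H p ≤ ‖p‖ ^ 2 / (4 * c) + C := by
  refine (hH p).2 ?_
  rintro _ ⟨v, rfl⟩
  have hinner : inner ℝ (-v) p ≤ ‖v‖ * ‖p‖ := (real_inner_le_norm _ _).trans_eq (by rw [norm_neg])
  linarith [hL v, mul_le_mul_sq_add_sq_div hc ‖p‖ ‖v‖]

theorem IsHamiltonian.abs_le (hH : IsHamiltonian L H) (hL0 : L 0 = 0) {c C : ℝ} (hc : 0 < c)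
    (hL : ∀ v, c * ‖v‖ ^ 2 - C ≤ L v) (p : F) : |H p| ≤ C + (4 * c)⁻¹ * ‖p‖ ^ 2 := by
  rw [abs_of_nonneg (hH.nonneg hL0 p), add_comm, ← div_eq_inv_mul]
  exact hH.le_sq_div_add hc hL p

theorem IsHamiltonian.convexOn (hH : IsHamiltonian L H) : ConvexOn ℝ univ H := by
  refine ⟨convex_univ, fun p _ q _ a b ha hb hab => (hH _).2 ?_⟩
  rintro _ ⟨v, rfl⟩
  have hsplit : inner ℝ (-v) (a • p + b • q) - L v
      = a * (inner ℝ (-v) p - L v) + b * (inner ℝ (-v) q - L v) := by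
    rw [inner_add_right, real_inner_smul_right, real_inner_smul_right]
    linear_combination L v * hab
  rw [hsplit, smul_eq_mul, smul_eq_mul]
  gcongr
  exacts [hH.inner_sub_le v p, hH.inner_sub_le v q]

end Hamiltonian

section Plans

variable {d : ℕ}

theorem measurable_smul_snd (a : ℝ) : Measurable (fun p : E d × E d => (p.1, a • p.2)) :=
  measurable_fst.prodMk (measurable_snd.const_smul a)

theorem sq_plNorm (γ : Measure (E d × E d)) : plNorm γ ^ 2 = ∫ p, ‖p.2‖ ^ 2 ∂γ :=
  Real.sq_sqrt (integral_nonneg fun _ => sq_nonneg _)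

theorem plNorm_nonneg (γ : Measure (E d × E d)) : 0 ≤ plNorm γ := Real.sqrt_nonneg _

theorem integral_scal (a : ℝ) (γ : Measure (E d × E d)) {g : E d × E d → ℝ}
    (hg : AEStronglyMeasurable g (scal a γ)) :
    ∫ p, g p ∂(scal a γ) = ∫ p, g (p.1, a • p.2) ∂γ :=
  integral_map (measurable_smul_snd a).aemeasurable hg

theorem scal_scal (a b : ℝ) (γ : Measure (E d × E d)) : scal a (scal b γ) = scal (a * b) γ := by
  rw [scal, scal, scal, Measure.map_map (measurable_smul_snd a) (measurable_smul_snd b)]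
  congr 1
  funext p
  simp [smul_smul]

theorem plNorm_scal (a : ℝ) (γ : Measure (E d × E d)) : plNorm (scal a γ) = |a| * plNorm γ := by
  rw [plNorm, plNorm, integral_scal a γ (g := fun p => ‖p.2‖ ^ 2)
    (continuous_snd.norm.pow 2).aestronglyMeasurable]
  simp only [norm_smul_sq, integral_const_mul]
  rw [Real.sqrt_mul (sq_nonneg a), Real.sqrt_sq_eq_abs]

theorem Lag_scal {L : E d → ℝ} (hL : Continuous L) (a : ℝ) (γ : Measure (E d × E d)) :
    Lag L (scal a γ) = ∫ p, L (a • p.2) ∂γ :=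
  integral_scal a γ (hL.comp continuous_snd).aestronglyMeasurable

variable {μ : Measure (E d)} {γ : Measure (E d × E d)}

theorem integrable_sq_snd_of_mem_plans (hγ : γ ∈ plans μ) :
    Integrable (fun p : E d × E d => ‖p.2‖ ^ 2) γ := by
  refine hγ.2.2.mono' (continuous_snd.norm.pow 2).aestronglyMeasurable
    (Eventually.of_forall fun p => ?_)
  rw [Real.norm_eq_abs, abs_of_nonneg (sq_nonneg _)]
  linarith [sq_nonneg ‖p.1‖]

theorem scal_mem_plans (a : ℝ) (hγ : γ ∈ plans μ) : scal a γ ∈ plans μ := by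
  obtain ⟨hprob, hfst, hint⟩ := hγ
  have hcont : Continuous fun p : E d × E d => ‖p.1‖ ^ 2 + ‖p.2‖ ^ 2 := by fun_prop
  refine ⟨Measure.isProbabilityMeasure_map (measurable_smul_snd a).aemeasurable, ?_, ?_⟩
  · rw [scal, Measure.map_map measurable_fst (measurable_smul_snd a)]
    exact hfst
  · refine (integrable_map_measure hcont.aestronglyMeasurable
      (measurable_smul_snd a).aemeasurable).2 ?_
    refine (hint.const_mul (1 + a ^ 2)).mono'
      (hcont.comp (continuous_fst.prodMk (continuous_snd.const_smul a))).aestronglyMeasurable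
      (Eventually.of_forall fun p => ?_)
    simp only [Function.comp_apply, norm_smul_sq, Real.norm_eq_abs]
    rw [abs_of_nonneg (by positivity)]
    nlinarith [mul_nonneg (sq_nonneg a) (sq_nonneg ‖p.1‖), sq_nonneg ‖p.2‖]

theorem plans_nonempty (hμ : μ ∈ P2 d) : (plans μ).Nonempty := by
  have hm : Measurable (fun x : E d => (x, (0 : E d))) := measurable_id.prodMk measurable_const
  have := hμ.1
  refine ⟨μ.map fun x => (x, 0), Measure.isProbabilityMeasure_map hm.aemeasurable, ?_, ?_⟩
  · rw [Measure.map_map measurable_fst hm]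
    exact Measure.map_id
  · refine (integrable_map_measure (g := fun p : E d × E d => ‖p.1‖ ^ 2 + ‖p.2‖ ^ 2)
      (by fun_prop : Continuous _).aestronglyMeasurable hm.aemeasurable).2 ?_
    simpa [Function.comp_def] using hμ.2

theorem integrable_comp_smul_snd {g : E d → ℝ} {A B : ℝ} (hg : Continuous g)
    (hgq : ∀ z, |g z| ≤ A + B * ‖z‖ ^ 2) (hγ : γ ∈ plans μ) (a : ℝ) :
    Integrable (fun p : E d × E d => g (a • p.2)) γ := by
  have := hγ.1
  refine integrable_comp_of_abs_le ?_
    (hg.comp (continuous_snd.const_smul a)).aestronglyMeasurable hgq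
  simpa only [norm_smul_sq] using (integrable_sq_snd_of_mem_plans hγ).const_mul (a ^ 2)

theorem integrable_comp_snd {g : E d → ℝ} {A B : ℝ} (hg : Continuous g)
    (hgq : ∀ z, |g z| ≤ A + B * ‖z‖ ^ 2) (hγ : γ ∈ plans μ) :
    Integrable (fun p : E d × E d => g p.2) γ := by
  simpa using integrable_comp_smul_snd hg hgq hγ 1

theorem expMap_mem_P2 (hγ : γ ∈ plans μ) : expMap γ ∈ P2 d := by
  obtain ⟨hprob, -, hint⟩ := hγ
  refine ⟨Measure.isProbabilityMeasure_map measurable_add.aemeasurable, ?_⟩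
  refine (integrable_map_measure (g := fun x : E d => ‖x‖ ^ 2)
    (continuous_norm.pow 2).aestronglyMeasurable measurable_add.aemeasurable).2 ?_
  refine (hint.const_mul 2).mono'
    ((continuous_fst.add continuous_snd).norm.pow 2).aestronglyMeasurable
    (Eventually.of_forall fun p => ?_)
  simp only [Function.comp_apply, Real.norm_eq_abs]
  rw [abs_of_nonneg (by positivity)]
  nlinarith [norm_add_le p.1 p.2, norm_nonneg (p.1 + p.2), sq_nonneg (‖p.1‖ - ‖p.2‖)]

end Plans

section Wasserstein

variable {d : ℕ}

theorem W2_le_of_isCoupling {μ ν : Measure (E d)} {θ : Measure (E d × E d)}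
    [IsProbabilityMeasure θ] (hθ : IsCoupling θ μ ν) :
    W2 μ ν ≤ √(∫ p, ‖p.1 - p.2‖ ^ 2 ∂θ) :=
  csInf_le ⟨0, by rintro _ ⟨_, _, _, rfl⟩; exact Real.sqrt_nonneg _⟩ ⟨θ, inferInstance, hθ, rfl⟩

theorem W2_map_le {α : Type*} [MeasurableSpace α] (ν : Measure α) [IsProbabilityMeasure ν]
    {f g : α → E d} (hf : Measurable f) (hg : Measurable g) :
    W2 (ν.map f) (ν.map g) ≤ √(∫ x, ‖f x - g x‖ ^ 2 ∂ν) := by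
  have hfg : Measurable fun x => (f x, g x) := hf.prodMk hg
  have := Measure.isProbabilityMeasure_map (μ := ν) hfg.aemeasurable
  have hW := W2_le_of_isCoupling (θ := ν.map fun x => (f x, g x))
    ⟨Measure.map_map measurable_fst hfg, Measure.map_map measurable_snd hfg⟩
  rwa [integral_map hfg.aemeasurable
    (by fun_prop : Continuous fun p : E d × E d => ‖p.1 - p.2‖ ^ 2).aestronglyMeasurable] at hW

variable {μ : Measure (E d)} {γ : Measure (E d × E d)}

theorem W2_expMap_le (hγ : γ ∈ plans μ) : W2 μ (expMap γ) ≤ plNorm γ := by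
  have := hγ.1
  have hW := W2_map_le γ measurable_fst measurable_add
  rw [hγ.2.1] at hW
  simpa [plNorm, expMap] using hW

theorem W2_expMap_scal_le [IsProbabilityMeasure γ] (a : ℝ) :
    W2 (expMap (scal a γ)) (expMap γ) ≤ |a - 1| * plNorm γ := by
  have hW := W2_map_le γ (f := fun p => p.1 + a • p.2) (by fun_prop) measurable_add
  have hdiff : ∀ p : E d × E d, ‖p.1 + a • p.2 - (p.1 + p.2)‖ ^ 2 = (a - 1) ^ 2 * ‖p.2‖ ^ 2 := by
    intro p
    rw [add_sub_add_left_eq_sub, ← norm_smul_sq, sub_smul, one_smul]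
  rw [expMap, scal, Measure.map_map measurable_add (measurable_smul_snd a)]
  simp only [hdiff, integral_const_mul, Real.sqrt_mul (sq_nonneg _), Real.sqrt_sq_eq_abs] at hW
  exact hW

end Wasserstein

section HopfLax

variable {d : ℕ} {G : Measure (E d) → ℝ} {L H : E d → ℝ} {μ : Measure (E d)}
  {γ : Measure (E d × E d)} {A B K c C : ℝ}

def hopfLaxCost (G : Measure (E d) → ℝ) (L : E d → ℝ) (s : ℝ) (γ : Measure (E d × E d)) : ℝ :=
  G (expMap γ) + s * Lag L (scal s⁻¹ γ)

theorem HL_le_hopfLaxCost {T t : ℝ}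
    (hbdd : BddBelow {r | ∃ γ ∈ plans μ, r = hopfLaxCost G L (T - t) γ}) (hγ : γ ∈ plans μ) :
    HL G L T t μ ≤ hopfLaxCost G L (T - t) γ :=
  csInf_le hbdd ⟨γ, hγ, rfl⟩

theorem le_HL {T t a : ℝ} (hμ : μ ∈ P2 d) (h : ∀ γ ∈ plans μ, a ≤ hopfLaxCost G L (T - t) γ) :
    a ≤ HL G L T t μ := by
  obtain ⟨γ, hγ⟩ := plans_nonempty hμ
  exact le_csInf ⟨_, γ, hγ, rfl⟩ fun _ ⟨γ, hγ, hr⟩ => hr ▸ h γ hγ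

theorem Lag_ge_of_coercive (hL : Continuous L) (hLq : ∀ z, |L z| ≤ A + B * ‖z‖ ^ 2)
    (hcoer : ∀ z, c * ‖z‖ ^ 2 - C ≤ L z) (hγ : γ ∈ plans μ) :
    c * plNorm γ ^ 2 - C ≤ Lag L γ := by
  have := hγ.1
  have hsq := (integrable_sq_snd_of_mem_plans hγ).const_mul c
  calc c * plNorm γ ^ 2 - C = ∫ p, (c * ‖p.2‖ ^ 2 - C) ∂γ := by
        rw [integral_sub hsq (integrable_const C), integral_const_mul, sq_plNorm]
        simp
    _ ≤ Lag L γ :=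
        integral_mono (hsq.sub (integrable_const C)) (integrable_comp_snd hL hLq hγ)
          fun p => hcoer p.2

theorem bddBelow_hopfLaxCost {s : ℝ} (hL : Continuous L) (hLq : ∀ z, |L z| ≤ A + B * ‖z‖ ^ 2)
    (hcoer : ∀ z, c * ‖z‖ ^ 2 - C ≤ L z) (hc : 0 < c) (hK : 0 ≤ K)
    (hG : ∀ μ ∈ P2 d, ∀ ν ∈ P2 d, |G μ - G ν| ≤ K * W2 μ ν) (hμ : μ ∈ P2 d) (hs : 0 < s) :
    BddBelow {r | ∃ γ ∈ plans μ, r = hopfLaxCost G L s γ} := by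
  refine ⟨G μ - C * s - K ^ 2 / (4 * (c / s)), ?_⟩
  rintro _ ⟨γ, hγ, rfl⟩
  have hGγ : G μ - K * plNorm γ ≤ G (expMap γ) := by
    have hdiff := (le_abs_self _).trans (hG μ hμ _ (expMap_mem_P2 hγ))
    linarith [mul_le_mul_of_nonneg_left (W2_expMap_le hγ) hK]
  have hLag := Lag_ge_of_coercive hL hLq hcoer (scal_mem_plans s⁻¹ hγ)
  rw [plNorm_scal, abs_of_pos (inv_pos.2 hs)] at hLag
  have hsLag : c / s * plNorm γ ^ 2 - C * s ≤ s * Lag L (scal s⁻¹ γ) :=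
    calc c / s * plNorm γ ^ 2 - C * s = s * (c * (s⁻¹ * plNorm γ) ^ 2 - C) := by
          field_simp
      _ ≤ s * Lag L (scal s⁻¹ γ) := mul_le_mul_of_nonneg_left hLag hs.le
  have hYoung := mul_le_mul_sq_add_sq_div (div_pos hc hs) K (plNorm γ)
  unfold hopfLaxCost
  linarith

theorem antitoneOn_mul_Lag_scal_inv (hLconv : ConvexOn ℝ univ L) (hL0 : L 0 = 0)
    (hLq : ∀ z, |L z| ≤ A + B * ‖z‖ ^ 2) (hγ : γ ∈ plans μ) :
    AntitoneOn (fun s => s * Lag L (scal s⁻¹ γ)) (Ioi 0) := by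
  have hL : Continuous L := hLconv.locallyLipschitz.continuous
  intro s' hs' s hs hle
  simp only [Lag_scal hL, ← integral_const_mul]
  exact integral_mono ((integrable_comp_smul_snd hL hLq hγ _).const_mul _)
    ((integrable_comp_smul_snd hL hLq hγ _).const_mul _)
    fun p => hLconv.antitoneOn_perspective hL0 p.2 hs' hs hle

theorem hopfLaxCost_scal_le {s h : ℝ} (hK : 0 ≤ K)
    (hG : ∀ μ ∈ P2 d, ∀ ν ∈ P2 d, |G μ - G ν| ≤ K * W2 μ ν) (hγ : γ ∈ plans μ) (hh : 0 ≤ h)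
    (hhs : h < s) :
    hopfLaxCost G L (s - h) (scal ((s - h) / s) γ)
      ≤ hopfLaxCost G L s γ + h * (K * plNorm (scal s⁻¹ γ) - Lag L (scal s⁻¹ γ)) := by
  have hs : 0 < s := hh.trans_lt hhs
  have := hγ.1
  have hscal : scal (s - h)⁻¹ (scal ((s - h) / s) γ) = scal s⁻¹ γ := by
    rw [scal_scal]
    congr 1
    field_simp [(sub_pos.2 hhs).ne']
  have hW : W2 (expMap (scal ((s - h) / s) γ)) (expMap γ) ≤ h * plNorm (scal s⁻¹ γ) := by
    have hcoef : |(s - h) / s - 1| = h * s⁻¹ := by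
      rw [show (s - h) / s - 1 = -(h * s⁻¹) by field_simp; ring, abs_neg,
        abs_of_nonneg (by positivity)]
    rw [plNorm_scal, abs_of_pos (inv_pos.2 hs), ← mul_assoc, ← hcoef]
    exact W2_expMap_scal_le _
  have hGle := (le_abs_self _).trans
    (hG _ (expMap_mem_P2 (scal_mem_plans ((s - h) / s) hγ)) _ (expMap_mem_P2 hγ))
  unfold hopfLaxCost
  rw [hscal]
  linear_combination hGle + mul_le_mul_of_nonneg_left hW hK

theorem integral_hamiltonian_scal_ge (hH : IsHamiltonian L H) (hHc : Continuous H)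
    (hHq : ∀ p, |H p| ≤ C + c * ‖p‖ ^ 2) (hL : Continuous L) (hLq : ∀ z, |L z| ≤ A + B * ‖z‖ ^ 2)
    (hγ : γ ∈ plans μ) (a : ℝ) :
    a * plNorm γ ^ 2 - Lag L γ ≤ ∫ q, H q.2 ∂(scal (-a) γ) := by
  have := hγ.1
  have hsq := (integrable_sq_snd_of_mem_plans hγ).const_mul a
  have hLint := integrable_comp_snd hL hLq hγ
  rw [integral_scal _ _ (g := fun q => H q.2) (hHc.comp continuous_snd).aestronglyMeasurable,
    sq_plNorm, Lag, ← integral_const_mul, ← integral_sub hsq hLint]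
  refine integral_mono (hsq.sub hLint) (integrable_comp_smul_snd hHc hHq hγ (-a)) fun p => ?_
  have hFY := hH.inner_sub_le p.2 ((-a) • p.2)
  rwa [inner_neg_left, real_inner_smul_right, real_inner_self_eq_norm_sq, neg_mul, neg_neg] at hFY

theorem le_sSup_integral_hamiltonian (hH : IsHamiltonian L H) (hL0 : L 0 = 0) (hc : 0 < c)
    (hcoer : ∀ z, c * ‖z‖ ^ 2 - C ≤ L z) (hK : 0 ≤ K) (hL : Continuous L)
    (hLq : ∀ z, |L z| ≤ A + B * ‖z‖ ^ 2) (hγ : γ ∈ plans μ) :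
    K * plNorm γ - Lag L γ ≤ sSup {r | ∃ ξ ∈ plans μ, plNorm ξ ≤ K ∧ r = ∫ q, H q.2 ∂ξ} := by
  have hHc : Continuous H := hH.convexOn.locallyLipschitz.continuous
  have hHq := hH.abs_le hL0 hc hcoer
  have hbdd : BddAbove {r | ∃ ξ ∈ plans μ, plNorm ξ ≤ K ∧ r = ∫ q, H q.2 ∂ξ} := by
    refine ⟨C + (4 * c)⁻¹ * K ^ 2, ?_⟩
    rintro _ ⟨ξ, hξ, hξK, rfl⟩
    have := hξ.1
    have hsq := (integrable_sq_snd_of_mem_plans hξ).const_mul (4 * c)⁻¹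
    calc ∫ q, H q.2 ∂ξ ≤ ∫ q, (C + (4 * c)⁻¹ * ‖q.2‖ ^ 2) ∂ξ :=
          integral_mono (integrable_comp_snd hHc hHq hξ) ((integrable_const C).add hsq)
            fun q => (le_abs_self _).trans (hHq q.2)
      _ = C + (4 * c)⁻¹ * plNorm ξ ^ 2 := by
          rw [integral_add (integrable_const C) hsq, integral_const_mul, sq_plNorm]
          simp
      _ ≤ C + (4 * c)⁻¹ * K ^ 2 := by
          gcongr
          exact plNorm_nonneg ξ
  set m := plNorm γ
  -- the maximiser in Fenchel–Young is `v ↦ -(K/m) v`; when `m = 0`, `K / 0 = 0` gives the zero plan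
  refine le_csSup_of_le hbdd ⟨scal (-(K / m)) γ, scal_mem_plans _ hγ, ?_, rfl⟩ ?_
  · rw [plNorm_scal, abs_neg, abs_of_nonneg (div_nonneg hK (plNorm_nonneg γ))]
    rcases (plNorm_nonneg γ).eq_or_lt with hm | hm
    · simpa [m, ← hm] using hK
    · rw [div_mul_cancel₀ _ hm.ne']
  · have hdual := integral_hamiltonian_scal_ge hH hHc hHq hL hLq hγ (K / m)
    have hKm : K / m * m ^ 2 = K * m := by
      rcases eq_or_ne m 0 with hm | hm
      · simp [hm]
      · field_simp
    rwa [hKm] at hdual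

end HopfLax

theorem hopf_lax_time_monotone_general {d : ℕ} (L H : E d → ℝ) (G : Measure (E d) → ℝ) (T K : ℝ)
    (hLconv : ConvexOn ℝ Set.univ L) (hL0 : L 0 = 0)
    (hquad : ∃ C > 0, ∀ z : E d, L z ≤ C * (1 + ‖z‖ ^ 2))
    (hcoer : ∃ c > 0, ∃ C > 0, ∀ z : E d, c * ‖z‖ ^ 2 - C ≤ L z)
    (hH : ∀ p : E d, IsLUB {r | ∃ v : E d, r = (rinner (-v) (p)) - L v} (H p))
    (hK : 0 ≤ K)
    (hG : ∀ μ ∈ P2 d, ∀ ν ∈ P2 d, |G μ - G ν| ≤ K * W2 μ ν)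
    (t h : ℝ) (hh : 0 < h) (hT : t + h < T)
    (μ : Measure (E d)) (hμ : μ ∈ P2 d) :
    HL G L T t μ ≤ HL G L T (t + h) μ ∧
      HL G L T (t + h) μ - HL G L T t μ ≤
        h * sSup {r | ∃ ξ ∈ plans μ, plNorm ξ ≤ K ∧ r = ∫ q, H q.2 ∂ξ} := by
  obtain ⟨Cq, hCq, hLquad⟩ := hquad
  obtain ⟨c, hc, C, hC, hLcoer⟩ := hcoer
  have hL : Continuous L := hLconv.locallyLipschitz.continuous
  have hLq : ∀ z, |L z| ≤ (Cq + C) + Cq * ‖z‖ ^ 2 := fun z =>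
    abs_le.2 ⟨by nlinarith [hLcoer z, sq_nonneg ‖z‖], by nlinarith [hLquad z]⟩
  have hbdd : ∀ τ < T, BddBelow {r | ∃ γ ∈ plans μ, r = hopfLaxCost G L (T - τ) γ} :=
    fun τ hτ => bddBelow_hopfLaxCost hL hLq hLcoer hc hK hG hμ (sub_pos.2 hτ)
  have hs : 0 < T - t := by linarith
  refine ⟨le_HL hμ fun γ hγ => ?_, ?_⟩
  · exact (HL_le_hopfLaxCost (hbdd t (by linarith)) hγ).trans (add_le_add le_rfl
      (antitoneOn_mul_Lag_scal_inv hLconv hL0 hLq hγ (sub_pos.2 hT) hs (by linarith)))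
  · rw [sub_le_comm]
    refine le_HL hμ fun γ hγ => ?_
    have hHL := HL_le_hopfLaxCost (hbdd _ hT) (scal_mem_plans ((T - t - h) / (T - t)) hγ)
    rw [show T - (t + h) = T - t - h by ring] at hHL
    have hdual := le_sSup_integral_hamiltonian hH hL0 hc hLcoer hK hL hLq
      (scal_mem_plans (T - t)⁻¹ hγ)
    linarith [hopfLaxCost_scal_le (L := L) hK hG hγ hh.le (by linarith : h < T - t),
      mul_le_mul_of_nonneg_left hdual hh.le]

theorem hopf_lax_time_monotone {d : ℕ} (L H : E d → ℝ) (G : Measure (E d) → ℝ) (T K : ℝ)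
    (hLconv : ConvexOn ℝ Set.univ L) (hL0 : L 0 = 0)
    (hsuper : ∀ M : ℝ, ∃ R : ℝ, ∀ z : E d, R ≤ ‖z‖ → M * ‖z‖ ≤ L z)
    (hquad : ∃ C > 0, ∀ z : E d, L z ≤ C * (1 + ‖z‖ ^ 2))
    (hcoer : ∃ c > 0, ∃ C > 0, ∀ z : E d, c * ‖z‖ ^ 2 - C ≤ L z)
    (hH : ∀ p : E d, IsLUB {r | ∃ v : E d, r = (rinner (-v) (p)) - L v} (H p))
    (hK : 0 ≤ K)
    (hG : ∀ μ ∈ P2 d, ∀ ν ∈ P2 d, |G μ - G ν| ≤ K * W2 μ ν)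
    (t h : ℝ) (ht : 0 ≤ t) (hh : 0 < h) (hT : t + h < T)
    (μ : Measure (E d)) (hμ : μ ∈ P2 d) :
    HL G L T t μ ≤ HL G L T (t + h) μ ∧
      HL G L T (t + h) μ - HL G L T t μ ≤
        h * sSup {r | ∃ ξ ∈ plans μ, plNorm ξ ≤ K ∧ r = ∫ q, H q.2 ∂ξ} :=
  hopf_lax_time_monotone_general L H G T K hLconv hL0 hquad hcoer hH hK hG t h hh hT μ hμ
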